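/- The graph of the 3-dimensional cube (vertices = the 12 edges of the cube, adjacency = sharing a point) has boxicity 2 but 1-boxicity 3: it is realizable as axis-parallel rectangles in ℝ² and as axis-parallel segments in ℝ³, but not as axis-parallel segments in ℝ². -/

import Mathlib

open Set

/-- An axis-parallel box in `ℝ^d`: a product of nonempty closed intervals. -/
def IsBoxIn (d : ℕ) (s : Set (Fin d → ℝ)) : Prop :=
  ∃ lo hi : Fin d → ℝ, (∀ i, lo i ≤ hi i) ∧
    s = {x | ∀ i, x i ∈ Set.Icc (lo i) (hi i)}

/-- A `p`-box in `ℝ^d`: a product of nonempty closed intervals, exactly `d - p`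
of which are degenerate (single points). -/
def IsPBoxIn (p d : ℕ) (s : Set (Fin d → ℝ)) : Prop :=
  ∃ lo hi : Fin d → ℝ, (∀ i, lo i ≤ hi i) ∧
    {i : Fin d | lo i = hi i}.ncard = d - p ∧
    s = {x | ∀ i, x i ∈ Set.Icc (lo i) (hi i)}

/-- A graph is an interval graph if it is the intersection graph of a family of
closed real intervals. -/
def IsIntervalGraph {V : Type*} (G : SimpleGraph V) : Prop :=
  ∃ a b : V → ℝ, (∀ v, a v ≤ b v) ∧
    ∀ u v : V, u ≠ v →
      (G.Adj u v ↔ (Set.Icc (a u) (b u) ∩ Set.Icc (a v) (b v)).Nonempty)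

/-- `G` is the intersection graph of a family of `p`-boxes in `ℝ^d`. -/
def RealizableAsPBoxes {V : Type*} (p d : ℕ) (G : SimpleGraph V) : Prop :=
  ∃ B : V → Set (Fin d → ℝ), (∀ v, IsPBoxIn p d (B v)) ∧
    ∀ u v : V, u ≠ v → (G.Adj u v ↔ (B u ∩ B v).Nonempty)

/-- `G` is the intersection graph of a family of (full) axis-parallel boxes in `ℝ^d`. -/
def RealizableAsBoxes {V : Type*} (d : ℕ) (G : SimpleGraph V) : Prop :=
  ∃ B : V → Set (Fin d → ℝ), (∀ v, IsBoxIn d (B v)) ∧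
    ∀ u v : V, u ≠ v → (G.Adj u v ↔ (B u ∩ B v).Nonempty)

/-- The intersection graph of a family of sets in `ℝ^d`. -/
def intersectionGraph {ι : Type*} {d : ℕ} (B : ι → Set (Fin d → ℝ)) : SimpleGraph ι :=
  SimpleGraph.fromRel fun i j => (B i ∩ B j).Nonempty

/-- The family `B` can be pierced by at most `n` points. -/
def Pierceable {ι : Type*} {d : ℕ} (B : ι → Set (Fin d → ℝ)) (n : ℕ) : Prop :=
  ∃ P : Finset (Fin d → ℝ), P.card ≤ n ∧ ∀ i, ∃ p ∈ P, p ∈ B i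

/-- The subfamily of `B` indexed by `S` can be pierced by at most `n` points. -/
def PierceableOn {ι : Type*} {d : ℕ} (B : ι → Set (Fin d → ℝ)) (S : Finset ι) (n : ℕ) : Prop :=
  ∃ P : Finset (Fin d → ℝ), P.card ≤ n ∧ ∀ i ∈ S, ∃ p ∈ P, p ∈ B i

/-- The cycle graph on `s` vertices, with vertex set `ZMod s`. -/
def cyc (s : ℕ) : SimpleGraph (ZMod s) := SimpleGraph.fromRel fun i j => j = i + 1

/-- The boxicity of a graph, as an extended natural number. -/
noncomputable def boxicity {V : Type*} (G : SimpleGraph V) : ℕ∞ :=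
  sInf {n : ℕ∞ | ∃ k : ℕ, n = k ∧ RealizableAsBoxes k G}

/-- The `p`-boxicity of a graph: the least `d ≥ p` such that `G` is realizable as
`p`-boxes in `ℝ^d` (possibly `∞`). -/
noncomputable def pboxicity {V : Type*} (p : ℕ) (G : SimpleGraph V) : ℕ∞ :=
  sInf {n : ℕ∞ | ∃ k : ℕ, n = k ∧ p ≤ k ∧ RealizableAsPBoxes p k G}

/-- The edge of the unit cube in direction `e.1`, at position `(e.2.1, e.2.2)` on the
two other (cyclically following) axes. -/
def cubeSeg (e : Fin 3 × Fin 2 × Fin 2) : Set (Fin 3 → ℝ) :=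
  {x | x e.1 ∈ Set.Icc (0 : ℝ) 1 ∧ x (e.1 + 1) = ((e.2.1 : ℕ) : ℝ) ∧
    x (e.1 + 2) = ((e.2.2 : ℕ) : ℝ)}

/-- The intersection graph of the 12 edges of the unit cube `[0,1]³`. -/
def CubeGraph : SimpleGraph (Fin 3 × Fin 2 × Fin 2) :=
  SimpleGraph.fromRel fun e f => (cubeSeg e ∩ cubeSeg f).Nonempty


/-!
The graph is realized by the cube's own edges in `ℝ³` and by explicit rectangles in `ℝ²`.
Each face of the cube is an induced 4-cycle, and since a 4-cycle is not an interval graph, in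
any box realization its two non-adjacent pairs are separated in different coordinates; this
rules out dimension at most 1. For segments in the plane, two of the three edges at a corner
are parallel by pigeonhole. They lie on a common face and, meeting, share their constant
coordinate, whose value the other two edges of that face also attain; so both non-adjacent
pairs of the face would be separated in the one remaining coordinate.
-/

section Boxes

variable {V ι α : Type*} [LinearOrder α]

theorem Set.Icc_inter_Icc_nonempty_or_of_cycle {a₁ b₁ a₂ b₂ a₃ b₃ a₄ b₄ : α}
    (h₁₂ : (Icc a₁ b₁ ∩ Icc a₂ b₂).Nonempty) (h₂₃ : (Icc a₂ b₂ ∩ Icc a₃ b₃).Nonempty)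
    (h₃₄ : (Icc a₃ b₃ ∩ Icc a₄ b₄).Nonempty) (h₄₁ : (Icc a₄ b₄ ∩ Icc a₁ b₁).Nonempty) :
    (Icc a₁ b₁ ∩ Icc a₃ b₃).Nonempty ∨ (Icc a₂ b₂ ∩ Icc a₄ b₄).Nonempty := by
  simp only [Icc_inter_Icc, nonempty_Icc, sup_le_iff, le_inf_iff] at *
  grind

theorem setOf_forall_mem_Icc_inter_nonempty_iff (lo hi lo' hi' : ι → α) :
    ({x : ι → α | ∀ i, x i ∈ Icc (lo i) (hi i)} ∩ {x | ∀ i, x i ∈ Icc (lo' i) (hi' i)}).Nonempty ↔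
      ∀ i, (Icc (lo i) (hi i) ∩ Icc (lo' i) (hi' i)).Nonempty := by
  rw [← univ_pi_nonempty_iff, pi_inter_distrib]
  simp only [Set.pi, mem_univ, true_implies]

structure SimpleGraph.IsInducedSquare (G : SimpleGraph V) (a b c d : V) : Prop where
  adj_ab : G.Adj a b
  adj_bc : G.Adj b c
  adj_cd : G.Adj c d
  adj_da : G.Adj d a
  ne_ac : a ≠ c
  ne_bd : b ≠ d
  not_adj_ac : ¬ G.Adj a c
  not_adj_bd : ¬ G.Adj b d

def SimpleGraph.IsBoxRealization (G : SimpleGraph V) (lo hi : V → ι → α) : Prop :=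
  ∀ u v, u ≠ v → (G.Adj u v ↔ ∀ i, (Icc (lo u i) (hi u i) ∩ Icc (lo v i) (hi v i)).Nonempty)

namespace SimpleGraph.IsBoxRealization

variable {G : SimpleGraph V} {lo hi : V → ι → α}

theorem of_eq_setOf {B : V → Set (ι → α)}
    (hB : ∀ v, B v = {x | ∀ i, x i ∈ Icc (lo v i) (hi v i)})
    (hG : ∀ u v, u ≠ v → (G.Adj u v ↔ (B u ∩ B v).Nonempty)) : G.IsBoxRealization lo hi :=
  fun u v huv => by rw [hG u v huv, hB, hB, setOf_forall_mem_Icc_inter_nonempty_iff]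

theorem realizableAsBoxes {d : ℕ} {lo hi : V → Fin d → ℝ} (hle : ∀ v i, lo v i ≤ hi v i)
    (hG : G.IsBoxRealization lo hi) : RealizableAsBoxes d G :=
  ⟨_, fun v => ⟨lo v, hi v, hle v, rfl⟩, fun u v huv => by
    rw [hG u v huv, setOf_forall_mem_Icc_inter_nonempty_iff]⟩

theorem exists_not_inter_nonempty (hG : G.IsBoxRealization lo hi) {u v : V} (huv : u ≠ v)
    (h : ¬ G.Adj u v) : ∃ i, ¬ (Icc (lo u i) (hi u i) ∩ Icc (lo v i) (hi v i)).Nonempty :=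
  not_forall.mp ((hG u v huv).not.mp h)

/-- For `i = j`, the projections to that coordinate would be intervals forming an induced
4-cycle. -/
theorem ne_of_isInducedSquare (hG : G.IsBoxRealization lo hi) {a b c d : V}
    (hs : G.IsInducedSquare a b c d) {i j : ι}
    (hac : ¬ (Icc (lo a i) (hi a i) ∩ Icc (lo c i) (hi c i)).Nonempty)
    (hbd : ¬ (Icc (lo b j) (hi b j) ∩ Icc (lo d j) (hi d j)).Nonempty) : i ≠ j := by
  rintro rfl
  have hadj {u v : V} (h : G.Adj u v) := (hG u v h.ne).mp h i
  exact (Icc_inter_Icc_nonempty_or_of_cycle (hadj hs.adj_ab) (hadj hs.adj_bc) (hadj hs.adj_cd)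
    (hadj hs.adj_da)).elim hac hbd

theorem not_isInducedSquare_of_subsingleton [Subsingleton ι] (hG : G.IsBoxRealization lo hi)
    (a b c d : V) : ¬ G.IsInducedSquare a b c d := fun hs => by
  obtain ⟨i, hac⟩ := hG.exists_not_inter_nonempty hs.ne_ac hs.not_adj_ac
  obtain ⟨j, hbd⟩ := hG.exists_not_inter_nonempty hs.ne_bd hs.not_adj_bd
  exact hG.ne_of_isInducedSquare hs hac hbd (Subsingleton.elim i j)

/-- Meeting and both degenerate in coordinate `k`, `a` and `d` are the same point there, which
also lies on `b` and `c`; so both non-edges must be separated in the other coordinate. -/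
theorem not_isInducedSquare_of_lo_eq_hi {lo hi : V → Fin 2 → α} (hG : G.IsBoxRealization lo hi)
    {a b c d : V} {k : Fin 2} (ha : lo a k = hi a k) (hd : lo d k = hi d k) :
    ¬ G.IsInducedSquare a b c d := fun hs => by
  have hadj {u v : V} (h : G.Adj u v) := (hG u v h.ne).mp h k
  set p := lo a k
  have hIa : Icc (lo a k) (hi a k) = {p} := by rw [← ha, Icc_self]
  have hId : Icc (lo d k) (hi d k) = {p} := by
    have hda := hadj hs.adj_da
    rw [← hd, Icc_self, hIa, singleton_inter_nonempty, mem_singleton_iff] at hda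
    rw [← hd, hda, Icc_self]
  have hb : p ∈ Icc (lo b k) (hi b k) := by simpa [hIa] using hadj hs.adj_ab
  have hc : p ∈ Icc (lo c k) (hi c k) := by simpa [hId] using hadj hs.adj_cd
  obtain ⟨i, hac⟩ := hG.exists_not_inter_nonempty hs.ne_ac hs.not_adj_ac
  obtain ⟨j, hbd⟩ := hG.exists_not_inter_nonempty hs.ne_bd hs.not_adj_bd
  have hik : i ≠ k := by
    rintro rfl
    exact hac ⟨p, hIa ▸ rfl, hc⟩
  have hjk : j ≠ k := by
    rintro rfl
    exact hbd ⟨p, hb, hId ▸ rfl⟩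
  exact hG.ne_of_isInducedSquare hs hac hbd (by omega)

end SimpleGraph.IsBoxRealization

theorem IsPBoxIn.isBoxIn {p d : ℕ} {s : Set (Fin d → ℝ)} (h : IsPBoxIn p d s) : IsBoxIn d s :=
  let ⟨lo, hi, hle, _, hs⟩ := h
  ⟨lo, hi, hle, hs⟩

theorem IsPBoxIn.exists_lo_eq_hi {p d : ℕ} {s : Set (Fin d → ℝ)} (h : IsPBoxIn p d s)
    (hpd : p < d) : ∃ lo hi : Fin d → ℝ, (∃ k, lo k = hi k) ∧
      s = {x | ∀ i, x i ∈ Icc (lo i) (hi i)} := by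
  obtain ⟨lo, hi, -, hcard, hs⟩ := h
  have hdeg : {i | lo i = hi i}.Nonempty := nonempty_of_ncard_ne_zero (by omega)
  exact ⟨lo, hi, hdeg, hs⟩

variable {G : SimpleGraph V}

theorem RealizableAsPBoxes.realizableAsBoxes {p d : ℕ} (h : RealizableAsPBoxes p d G) :
    RealizableAsBoxes d G :=
  let ⟨B, hB, hG⟩ := h
  ⟨B, fun v => (hB v).isBoxIn, hG⟩

theorem RealizableAsBoxes.exists_isBoxRealization {d : ℕ} (h : RealizableAsBoxes d G) :
    ∃ lo hi : V → Fin d → ℝ, G.IsBoxRealization lo hi := by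
  obtain ⟨B, hB, hG⟩ := h
  choose lo hi _ hBeq using hB
  exact ⟨lo, hi, .of_eq_setOf hBeq hG⟩

theorem RealizableAsPBoxes.exists_isBoxRealization {p d : ℕ} (h : RealizableAsPBoxes p d G)
    (hpd : p < d) :
    ∃ lo hi : V → Fin d → ℝ, (∀ v, ∃ k, lo v k = hi v k) ∧ G.IsBoxRealization lo hi := by
  obtain ⟨B, hB, hG⟩ := h
  choose lo hi hdeg hBeq using fun v => (hB v).exists_lo_eq_hi hpd
  exact ⟨lo, hi, hdeg, .of_eq_setOf hBeq hG⟩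

end Boxes

theorem sInf_setOf_natCast_eq {P : ℕ → Prop} {m : ℕ} (hm : P m) (hlt : ∀ k < m, ¬ P k) :
    sInf {n : ℕ∞ | ∃ k : ℕ, n = k ∧ P k} = m :=
  le_antisymm (sInf_le ⟨m, rfl, hm⟩) (le_sInf fun _ ⟨k, hk, hPk⟩ =>
    hk ▸ Nat.cast_le.mpr (not_lt.mp fun h => hlt k h hPk))

def IsCubeEdgeEnd (e : Fin 3 × Fin 2 × Fin 2) (v : Fin 3 → Fin 2) : Prop :=
  v (e.1 + 1) = e.2.1 ∧ v (e.1 + 2) = e.2.2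

instance (e : Fin 3 × Fin 2 × Fin 2) : DecidablePred (IsCubeEdgeEnd e) := fun _ => by
  unfold IsCubeEdgeEnd; infer_instance

noncomputable def roundFin2 (t : ℝ) : Fin 2 := if t < 1 / 2 then 0 else 1

theorem roundFin2_natCast (c : Fin 2) : roundFin2 ((c : ℕ) : ℝ) = c := by
  fin_cases c <;> norm_num [roundFin2]

theorem isCubeEdgeEnd_roundFin2 {e : Fin 3 × Fin 2 × Fin 2} {x : Fin 3 → ℝ}
    (hx : x ∈ cubeSeg e) : IsCubeEdgeEnd e (roundFin2 ∘ x) := by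
  obtain ⟨-, h₁, h₂⟩ := hx
  simp [IsCubeEdgeEnd, h₁, h₂, roundFin2_natCast]

theorem natCast_mem_cubeSeg {e : Fin 3 × Fin 2 × Fin 2} {v : Fin 3 → Fin 2}
    (hv : IsCubeEdgeEnd e v) : (fun i => ((v i : ℕ) : ℝ)) ∈ cubeSeg e := by
  obtain ⟨h₁, h₂⟩ := hv
  exact ⟨⟨by positivity, Nat.cast_le_one.mpr (v e.1).is_le⟩, by simp only [h₁], by simp only [h₂]⟩

theorem cubeSeg_inter_nonempty_iff (e f : Fin 3 × Fin 2 × Fin 2) :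
    (cubeSeg e ∩ cubeSeg f).Nonempty ↔ ∃ v, IsCubeEdgeEnd e v ∧ IsCubeEdgeEnd f v :=
  ⟨fun ⟨_, hxe, hxf⟩ => ⟨_, isCubeEdgeEnd_roundFin2 hxe, isCubeEdgeEnd_roundFin2 hxf⟩,
    fun ⟨_, hve, hvf⟩ => ⟨_, natCast_mem_cubeSeg hve, natCast_mem_cubeSeg hvf⟩⟩

theorem cubeGraph_adj_iff_inter_nonempty {e f : Fin 3 × Fin 2 × Fin 2} :
    CubeGraph.Adj e f ↔ e ≠ f ∧ (cubeSeg e ∩ cubeSeg f).Nonempty := by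
  rw [CubeGraph, SimpleGraph.fromRel_adj, inter_comm (cubeSeg f), or_self]

theorem cubeGraph_adj {e f : Fin 3 × Fin 2 × Fin 2} :
    CubeGraph.Adj e f ↔ e ≠ f ∧ ∃ v, IsCubeEdgeEnd e v ∧ IsCubeEdgeEnd f v := by
  rw [cubeGraph_adj_iff_inter_nonempty, cubeSeg_inter_nonempty_iff]

instance : DecidableRel CubeGraph.Adj := fun _ _ => decidable_of_iff _ cubeGraph_adj.symm

theorem cubeGraph_isInducedSquare (d : Fin 3) :
    CubeGraph.IsInducedSquare (d, 0, 0) (d + 1, 0, 1) (d, 1, 0) (d + 1, 0, 0) := by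
  constructor <;> revert d <;> decide

theorem cubeSeg_isPBoxIn (e : Fin 3 × Fin 2 × Fin 2) : IsPBoxIn 1 3 (cubeSeg e) := by
  obtain ⟨d, a, b⟩ := e
  let c : Fin 3 → ℝ := fun i => if i = d + 1 then a else b
  refine ⟨Function.update c d 0, Function.update c d 1, fun i => ?_, ?_, ?_⟩
  · rcases eq_or_ne i d with rfl | h <;> simp [*]
  · have hdeg : {i | Function.update c d 0 i = Function.update c d 1 i} = {d}ᶜ := by
      ext i
      rcases eq_or_ne i d with rfl | h <;> simp [*]
    simp [hdeg, ncard_eq_toFinset_card', Finset.card_compl]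
  · ext x
    rw [mem_ofPred_eq, ← (Equiv.addLeft d).forall_congr_right]
    simp [cubeSeg, Fin.forall_fin_succ, c, Icc_self, -mem_Icc]

theorem cubeGraph_realizableAsPBoxes_one_three : RealizableAsPBoxes 1 3 CubeGraph :=
  ⟨cubeSeg, cubeSeg_isPBoxIn, fun _ _ hef => by simp [cubeGraph_adj_iff_inter_nonempty, hef]⟩

/-- The edge `e` is realized by the rectangle `∏ i, Icc (cubeRect e i).1 (cubeRect e i).2`. -/
def cubeRect : Fin 3 × Fin 2 × Fin 2 → Fin 2 → ℕ × ℕ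
  | (0, 0, 0) => ![(2, 8), (2, 2)]
  | (0, 0, 1) => ![(2, 8), (8, 8)]
  | (0, 1, 0) => ![(3, 7), (4, 5)]
  | (0, 1, 1) => ![(4, 7), (7, 7)]
  | (1, 0, 0) => ![(2, 4), (2, 6)]
  | (1, 0, 1) => ![(6, 8), (0, 4)]
  | (1, 1, 0) => ![(2, 5), (7, 8)]
  | (1, 1, 1) => ![(6, 8), (6, 8)]
  | (2, 0, 0) => ![(1, 2), (0, 8)]
  | (2, 0, 1) => ![(3, 4), (5, 7)]
  | (2, 1, 0) => ![(8, 8), (1, 8)]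
  | (2, 1, 1) => ![(7, 7), (3, 7)]

theorem cubeGraph_realizableAsBoxes_two : RealizableAsBoxes 2 CubeGraph := by
  refine SimpleGraph.IsBoxRealization.realizableAsBoxes (lo := fun e i => ((cubeRect e i).1 : ℝ))
    (hi := fun e i => ((cubeRect e i).2 : ℝ)) (fun e i => ?_) ?_
  · exact Nat.cast_le.mpr (by revert e i; decide)
  · intro e f hef
    simp only [Icc_inter_Icc, nonempty_Icc, ← Nat.cast_max, ← Nat.cast_min, Nat.cast_le]
    revert e f
    decide

theorem cubeGraph_not_realizableAsBoxes {d : ℕ} (hd : d ≤ 1) :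
    ¬ RealizableAsBoxes d CubeGraph := fun h => by
  obtain ⟨lo, hi, hG⟩ := h.exists_isBoxRealization
  have := Fin.subsingleton_iff_le_one.mpr hd
  exact hG.not_isInducedSquare_of_subsingleton _ _ _ _ (cubeGraph_isInducedSquare 0)

theorem cubeGraph_not_realizableAsPBoxes_one_two : ¬ RealizableAsPBoxes 1 2 CubeGraph := fun h => by
  obtain ⟨lo, hi, hdeg, hG⟩ := h.exists_isBoxRealization one_lt_two
  choose k hk using hdeg
  -- two of the three edges at the origin become parallel segments
  obtain ⟨d₁, d₂, hne, hk₁₂⟩ :=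
    Fintype.exists_ne_map_eq_of_card_lt (fun d : Fin 3 => k (d, 0, 0)) (by simp)
  obtain rfl | rfl : d₂ = d₁ + 1 ∨ d₁ = d₂ + 1 :=
    (by decide : ∀ d₁ d₂ : Fin 3, d₁ ≠ d₂ → d₂ = d₁ + 1 ∨ d₁ = d₂ + 1) d₁ d₂ hne
  · exact hG.not_isInducedSquare_of_lo_eq_hi (hk _) (hk₁₂ ▸ hk _) (cubeGraph_isInducedSquare d₁)
  · exact hG.not_isInducedSquare_of_lo_eq_hi (hk _) (hk₁₂.symm ▸ hk _)
      (cubeGraph_isInducedSquare d₂)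

/-- the cube graph has boxicity 2 and 1-boxicity 3: realizable as boxes
in `ℝ²` and segments in `ℝ³`, but not as segments in `ℝ²`. -/
theorem cube_graph_boxicity :
    boxicity CubeGraph = 2 ∧ pboxicity 1 CubeGraph = 3 ∧
    RealizableAsBoxes 2 CubeGraph ∧ RealizableAsPBoxes 1 3 CubeGraph ∧
    ¬ RealizableAsPBoxes 1 2 CubeGraph := by
  have h₂ := cubeGraph_realizableAsBoxes_two
  have h₃ := cubeGraph_realizableAsPBoxes_one_three
  have hn₂ := cubeGraph_not_realizableAsPBoxes_one_two
  have hbox : boxicity CubeGraph = 2 :=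
    sInf_setOf_natCast_eq (m := 2) h₂ fun k hk => cubeGraph_not_realizableAsBoxes (by omega)
  have hseg : pboxicity 1 CubeGraph = 3 := by
    refine sInf_setOf_natCast_eq (m := 3) ⟨by norm_num, h₃⟩ ?_
    rintro k hk ⟨hk₁, hk'⟩
    interval_cases k
    · exact cubeGraph_not_realizableAsBoxes le_rfl hk'.realizableAsBoxes
    · exact hn₂ hk'
  exact ⟨hbox, hseg, h₂, h₃, hn₂⟩
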